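/- (Composition of pre-instruments.) Let A, B₁, B₂ be unital ℂ-algebras, Θ₁ : A ⊗ B₁ → A ⊗ B₁ and Θ₂ : A ⊗ B₂ → A ⊗ B₂ unital homomorphisms, and suppose the total scattering map Θ on A ⊗ B₁ ⊗ B₂ satisfies the causal factorisation Θ = (Θ₁ ⊗ id) ∘ (Θ₂ ⊗₂ id), where (Θ₂ ⊗₂ id) acts as Θ₂ on the A and B₂ factors. Then for all states σ₁ on B₁, σ₂ on B₂ and all E₁ ∈ B₁, E₂ ∈ B₂: I_{σ₂}(E₂) ∘ I_{σ₁}(E₁) = I_{σ₁⊗σ₂}(E₁ ⊗ E₂), where I_σ(F)(ω)(a) = (ω ⊗ σ)(Θ(a ⊗ F)). -/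

import Mathlib

open scoped TensorProduct ComplexOrder

/-- The product functional `ω ⊗ σ` on `A ⊗ B`. -/
noncomputable def tensorFun {A B : Type*} [Ring A] [Ring B] [Algebra ℂ A] [Algebra ℂ B]
    (ω : A →ₗ[ℂ] ℂ) (σ : B →ₗ[ℂ] ℂ) : A ⊗[ℂ] B →ₗ[ℂ] ℂ :=
  (TensorProduct.lid ℂ ℂ).toLinearMap ∘ₗ TensorProduct.map ω σ

/-- The pre-instrument `I_σ(F)(ω)(a) = (ω ⊗ σ)(Θ(a ⊗ F))`, as a linear functional. -/
noncomputable def preInstr {A B : Type*} [Ring A] [Ring B] [Algebra ℂ A] [Algebra ℂ B]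
    (Θ : A ⊗[ℂ] B →ₐ[ℂ] A ⊗[ℂ] B) (σ : B →ₗ[ℂ] ℂ) (F : B) (ω : A →ₗ[ℂ] ℂ) :
    A →ₗ[ℂ] ℂ :=
  tensorFun ω σ ∘ₗ Θ.toLinearMap ∘ₗ (TensorProduct.mk ℂ A B).flip F

/-- Reordering isomorphism `(A ⊗ B₁) ⊗ B₂ ≃ (A ⊗ B₂) ⊗ B₁`. -/
noncomputable def reorder (A B₁ B₂ : Type*) [Ring A] [Ring B₁] [Ring B₂]
    [Algebra ℂ A] [Algebra ℂ B₁] [Algebra ℂ B₂] :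
    (A ⊗[ℂ] B₁) ⊗[ℂ] B₂ ≃ₐ[ℂ] (A ⊗[ℂ] B₂) ⊗[ℂ] B₁ :=
  (Algebra.TensorProduct.assoc ℂ ℂ ℂ A B₁ B₂).trans
    ((Algebra.TensorProduct.congr AlgEquiv.refl (Algebra.TensorProduct.comm ℂ B₁ B₂)).trans
      (Algebra.TensorProduct.assoc ℂ ℂ ℂ A B₂ B₁).symm)

/-- The extension `Θ₂ ⊗₂ id` of `Θ₂ : A ⊗ B₂ → A ⊗ B₂`, acting as `Θ₂` on the `A` and
`B₂` factors of `(A ⊗ B₁) ⊗ B₂`. -/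
noncomputable def extend₂ {A B₁ B₂ : Type*} [Ring A] [Ring B₁] [Ring B₂]
    [Algebra ℂ A] [Algebra ℂ B₁] [Algebra ℂ B₂]
    (Θ₂ : A ⊗[ℂ] B₂ →ₐ[ℂ] A ⊗[ℂ] B₂) :
    (A ⊗[ℂ] B₁) ⊗[ℂ] B₂ →ₐ[ℂ] (A ⊗[ℂ] B₁) ⊗[ℂ] B₂ :=
  ((reorder A B₁ B₂).symm.toAlgHom.comp
    (Algebra.TensorProduct.map Θ₂ (AlgHom.id ℂ B₁))).comp (reorder A B₁ B₂).toAlgHom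

/-! The functional `I_{σ₁}(E₁)(ω) ⊗ σ₂` on `A ⊗ B₂` is `ω ⊗ σ₁ ⊗ σ₂` composed with
`x ↦ (Θ₁ ⊗ id)(x ⊗ E₁)` (slots reordered), as one checks on elementary tensors. Evaluating it at
`x = Θ₂(a ⊗ E₂)` gives `(Θ₁ ⊗ id)((Θ₂ ⊗₂ id)(a ⊗ E₁ ⊗ E₂))`, which is the causal factorisation
of `Θ`. -/

section

variable {A B B₁ B₂ : Type*} [Ring A] [Ring B] [Ring B₁] [Ring B₂]
  [Algebra ℂ A] [Algebra ℂ B] [Algebra ℂ B₁] [Algebra ℂ B₂]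

@[simp]
theorem tensorFun_tmul (ω : A →ₗ[ℂ] ℂ) (σ : B →ₗ[ℂ] ℂ) (a : A) (b : B) :
    tensorFun ω σ (a ⊗ₜ b) = ω a * σ b :=
  rfl

theorem preInstr_apply (Θ : A ⊗[ℂ] B →ₐ[ℂ] A ⊗[ℂ] B) (σ : B →ₗ[ℂ] ℂ) (F : B)
    (ω : A →ₗ[ℂ] ℂ) (a : A) :
    preInstr Θ σ F ω a = tensorFun ω σ (Θ (a ⊗ₜ F)) :=
  rfl

@[simp]
theorem reorder_tmul (a : A) (b₁ : B₁) (b₂ : B₂) :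
    reorder A B₁ B₂ ((a ⊗ₜ b₁) ⊗ₜ b₂) = (a ⊗ₜ b₂) ⊗ₜ b₁ :=
  rfl

@[simp]
theorem reorder_symm_tmul (a : A) (b₁ : B₁) (b₂ : B₂) :
    (reorder A B₁ B₂).symm ((a ⊗ₜ b₂) ⊗ₜ b₁) = (a ⊗ₜ b₁) ⊗ₜ b₂ := by
  rw [AlgEquiv.symm_apply_eq, reorder_tmul]

theorem extend₂_tmul (Θ₂ : A ⊗[ℂ] B₂ →ₐ[ℂ] A ⊗[ℂ] B₂) (a : A) (b₁ : B₁) (b₂ : B₂) :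
    extend₂ Θ₂ ((a ⊗ₜ b₁) ⊗ₜ b₂) = (reorder A B₁ B₂).symm (Θ₂ (a ⊗ₜ b₂) ⊗ₜ b₁) := by
  simp [extend₂]

theorem tensorFun_preInstr_apply (Θ₁ : A ⊗[ℂ] B₁ →ₐ[ℂ] A ⊗[ℂ] B₁) (σ₁ : B₁ →ₗ[ℂ] ℂ)
    (σ₂ : B₂ →ₗ[ℂ] ℂ) (E₁ : B₁) (ω : A →ₗ[ℂ] ℂ) (x : A ⊗[ℂ] B₂) :
    tensorFun (preInstr Θ₁ σ₁ E₁ ω) σ₂ x =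
      tensorFun (tensorFun ω σ₁) σ₂
        (Algebra.TensorProduct.map Θ₁ (AlgHom.id ℂ B₂) ((reorder A B₁ B₂).symm (x ⊗ₜ E₁))) := by
  induction x using TensorProduct.induction_on with
  | zero => simp
  | tmul a b => simp [preInstr_apply]
  | add x y hx hy => simp only [TensorProduct.add_tmul, map_add, hx, hy]

end

theorem preInstr_composition_general {A B₁ B₂ : Type*} [Ring A] [Ring B₁] [Ring B₂]
    [Algebra ℂ A] [Algebra ℂ B₁] [Algebra ℂ B₂]
    (Θ₁ : A ⊗[ℂ] B₁ →ₐ[ℂ] A ⊗[ℂ] B₁) (Θ₂ : A ⊗[ℂ] B₂ →ₐ[ℂ] A ⊗[ℂ] B₂)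
    (Θ : (A ⊗[ℂ] B₁) ⊗[ℂ] B₂ →ₐ[ℂ] (A ⊗[ℂ] B₁) ⊗[ℂ] B₂)
    (hfact : Θ = (Algebra.TensorProduct.map Θ₁ (AlgHom.id ℂ B₂)).comp (extend₂ Θ₂))
    (σ₁ : B₁ →ₗ[ℂ] ℂ) (σ₂ : B₂ →ₗ[ℂ] ℂ)
    (E₁ : B₁) (E₂ : B₂) :
    ∀ (ω : A →ₗ[ℂ] ℂ) (a : A),
      preInstr Θ₂ σ₂ E₂ (preInstr Θ₁ σ₁ E₁ ω) a =
        tensorFun (tensorFun ω σ₁) σ₂ (Θ ((a ⊗ₜ[ℂ] E₁) ⊗ₜ[ℂ] E₂)) := by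
  intro ω a
  rw [preInstr_apply, tensorFun_preInstr_apply, hfact, AlgHom.comp_apply, extend₂_tmul]

/-- Composition of pre-instruments for causally ordered coupling zones: under causal
factorisation `Θ = (Θ₁ ⊗ id) ∘ (Θ₂ ⊗₂ id)`, one has
`I_{σ₂}(E₂) ∘ I_{σ₁}(E₁) = I_{σ₁⊗σ₂}(E₁ ⊗ E₂)`. -/
theorem preInstr_composition {A B₁ B₂ : Type*} [Ring A] [Ring B₁] [Ring B₂]
    [Algebra ℂ A] [Algebra ℂ B₁] [Algebra ℂ B₂]
    [StarRing B₁] [StarModule ℂ B₁] [StarRing B₂] [StarModule ℂ B₂]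
    (Θ₁ : A ⊗[ℂ] B₁ →ₐ[ℂ] A ⊗[ℂ] B₁) (Θ₂ : A ⊗[ℂ] B₂ →ₐ[ℂ] A ⊗[ℂ] B₂)
    (Θ : (A ⊗[ℂ] B₁) ⊗[ℂ] B₂ →ₐ[ℂ] (A ⊗[ℂ] B₁) ⊗[ℂ] B₂)
    (hfact : Θ = (Algebra.TensorProduct.map Θ₁ (AlgHom.id ℂ B₂)).comp (extend₂ Θ₂))
    (σ₁ : B₁ →ₗ[ℂ] ℂ) (hσ₁1 : σ₁ 1 = 1) (hσ₁pos : ∀ b, 0 ≤ σ₁ (star b * b))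
    (σ₂ : B₂ →ₗ[ℂ] ℂ) (hσ₂1 : σ₂ 1 = 1) (hσ₂pos : ∀ b, 0 ≤ σ₂ (star b * b))
    (E₁ : B₁) (E₂ : B₂) :
    ∀ (ω : A →ₗ[ℂ] ℂ) (a : A),
      preInstr Θ₂ σ₂ E₂ (preInstr Θ₁ σ₁ E₁ ω) a =
        tensorFun (tensorFun ω σ₁) σ₂ (Θ ((a ⊗ₜ[ℂ] E₁) ⊗ₜ[ℂ] E₂)) :=
  preInstr_composition_general Θ₁ Θ₂ Θ hfact σ₁ σ₂ E₁ E₂
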